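/- arXiv:2305.19145 — 2 statements merged into one kernel-verified Lean document; each statement's English description precedes it below -/
import Mathlib

section
/- (Failure of the maximum modulus theorem for the left-invariant carré du champ.) There exist r > 0 and a smooth function f : ℝ³ → ℝ — namely f(x,y,σ) = x + 6yσ − x³ − 21(xσ² − (1/8)xy⁴ + (1/3)y³σ − (1/40)x⁵) — such that: Δ_H f = 0 on the Euclidean ball B = {(x,y,σ) : x² + y² + σ² < r²}; |∇_H f|² ≤ 1 on B; |∇_H f(0,0,0)|² = 1; and yet f is not linear on B, i.e., there exist no constants α, a, b ∈ ℝ with f(x,y,σ) = α + ax + by for all (x,y,σ) ∈ B. -/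
noncomputable section

/-- Partial derivative `∂_x` on `ℝ³ = ℝ × ℝ × ℝ` with coordinates `(x, y, σ)`. -/
def Dx (f : ℝ × ℝ × ℝ → ℝ) (p : ℝ × ℝ × ℝ) : ℝ := fderiv ℝ f p (1, 0, 0)

/-- Partial derivative `∂_y`. -/
def Dy (f : ℝ × ℝ × ℝ → ℝ) (p : ℝ × ℝ × ℝ) : ℝ := fderiv ℝ f p (0, 1, 0)

/-- Partial derivative `∂_σ`. -/
def Ds (f : ℝ × ℝ × ℝ → ℝ) (p : ℝ × ℝ × ℝ) : ℝ := fderiv ℝ f p (0, 0, 1)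

/-- The left-invariant horizontal vector field `X₁ = ∂_x − (y/2)∂_σ` of `ℍ¹`. -/
def X1 (f : ℝ × ℝ × ℝ → ℝ) (p : ℝ × ℝ × ℝ) : ℝ := Dx f p - p.2.1 / 2 * Ds f p

/-- The left-invariant horizontal vector field `X₂ = ∂_y + (x/2)∂_σ` of `ℍ¹`. -/
def X2 (f : ℝ × ℝ × ℝ → ℝ) (p : ℝ × ℝ × ℝ) : ℝ := Dy f p + p.1 / 2 * Ds f p

/-- The right-invariant horizontal vector field `X̃₁ = ∂_x + (y/2)∂_σ` of `ℍ¹`. -/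
def X1r (f : ℝ × ℝ × ℝ → ℝ) (p : ℝ × ℝ × ℝ) : ℝ := Dx f p + p.2.1 / 2 * Ds f p

/-- The right-invariant horizontal vector field `X̃₂ = ∂_y − (x/2)∂_σ` of `ℍ¹`. -/
def X2r (f : ℝ × ℝ × ℝ → ℝ) (p : ℝ × ℝ × ℝ) : ℝ := Dy f p - p.1 / 2 * Ds f p

/-- The horizontal Laplacian `Δ_H = X₁² + X₂²` of `ℍ¹`. -/
def lapH (f : ℝ × ℝ × ℝ → ℝ) (p : ℝ × ℝ × ℝ) : ℝ := X1 (X1 f) p + X2 (X2 f) p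

/-- The left carré du champ `|∇_H f|² = (X₁f)² + (X₂f)²`. -/
def gammaL (f : ℝ × ℝ × ℝ → ℝ) (p : ℝ × ℝ × ℝ) : ℝ := (X1 f p) ^ 2 + (X2 f p) ^ 2

/-- The right carré du champ `|∇̃_H f|² = (X̃₁f)² + (X̃₂f)²`. -/
def gammaR (f : ℝ × ℝ × ℝ → ℝ) (p : ℝ × ℝ × ℝ) : ℝ := (X1r f p) ^ 2 + (X2r f p) ^ 2

/-- The counterexample function
`f(x,y,σ) = x + 6yσ − x³ − 21(xσ² − (1/8)xy⁴ + (1/3)y³σ − (1/40)x⁵)`. -/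
def fex : ℝ × ℝ × ℝ → ℝ := fun p =>
  p.1 + 6 * p.2.1 * p.2.2 - p.1 ^ 3
    - 21 * (p.1 * p.2.2 ^ 2 - (1 / 8) * p.1 * p.2.1 ^ 4 + (1 / 3) * p.2.1 ^ 3 * p.2.2
      - (1 / 40) * p.1 ^ 5)


private lemma sq_one_sub' {t : ℝ} (h0 : 0 ≤ t) (h1 : t ≤ 1/10) : (1-t)^2 ≤ 1-(19/10)*t := by
  nlinarith

private lemma sq_add_split' (a b : ℝ) : (a+b)^2 ≤ (51/50)*a^2 + 51*b^2 := by
  nlinarith [sq_nonneg ((1/50)*a - b)]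

set_option maxHeartbeats 2000000 in
lemma key_ineq (x y z : ℝ) (h : x^2 + y^2 + z^2 < (1/20)^2) :
    (1 - 3*x^2 - 3*y^2 - 21*z^2 + 21*x*y*z + (21/8)*x^4 + (49/8)*y^4)^2
    + (6*z + 3*x*y + 7*x*y^3 - 21*y^2*z - 21*x^2*z)^2 ≤ 1 := by
  have hx2 : x^2 ≤ 1/400 := by nlinarith [sq_nonneg y, sq_nonneg z]
  have hy2 : y^2 ≤ 1/400 := by nlinarith [sq_nonneg x, sq_nonneg z]
  have hz2 : z^2 ≤ 1/400 := by nlinarith [sq_nonneg x, sq_nonneg y]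
  have hza : z ≤ 1/20 := by nlinarith [sq_nonneg (z - 1/20)]
  have hzb : -(1/20) ≤ z := by nlinarith [sq_nonneg (z + 1/20)]
  have hxyz : 4*(x*y*z) ≤ (1/10)*(x^2+y^2) := by
    nlinarith [mul_nonneg (by linarith : (0:ℝ) ≤ 1/20 - z) (sq_nonneg (x+y)),
      mul_nonneg (by linarith : (0:ℝ) ≤ 1/20 + z) (sq_nonneg (x-y))]
  have hxyz' : -((1/10)*(x^2+y^2)) ≤ 4*(x*y*z) := by
    nlinarith [mul_nonneg (by linarith : (0:ℝ) ≤ 1/20 - z) (sq_nonneg (x-y)),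
      mul_nonneg (by linarith : (0:ℝ) ≤ 1/20 + z) (sq_nonneg (x+y))]
  have hx4 : x^4 ≤ (1/400)*x^2 := by nlinarith [sq_nonneg x]
  have hy4 : y^4 ≤ (1/400)*y^2 := by nlinarith [sq_nonneg y]
  have hxy22 : x^2*y^2 ≤ (1/400)*y^2 := by nlinarith [sq_nonneg y]
  have hg1 : (12/5)*x^2 + (12/5)*y^2 + (102/5)*z^2 ≤
      3*x^2 + 3*y^2 + 21*z^2 - 21*x*y*z - (21/8)*x^4 - (49/8)*y^4 := by
    nlinarith [hxyz', hx4, hy4]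
  have hg0 : 0 ≤ 3*x^2 + 3*y^2 + 21*z^2 - 21*x*y*z - (21/8)*x^4 - (49/8)*y^4 := by
    nlinarith [hg1, sq_nonneg x, sq_nonneg y, sq_nonneg z]
  have hg2 : 3*x^2 + 3*y^2 + 21*z^2 - 21*x*y*z - (21/8)*x^4 - (49/8)*y^4 ≤ 1/10 := by
    nlinarith [hxyz', hx2, hy2, hz2, sq_nonneg (x^2), sq_nonneg (y^2)]
  have hu2 : (1 - (3*x^2 + 3*y^2 + 21*z^2 - 21*x*y*z - (21/8)*x^4 - (49/8)*y^4))^2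
      ≤ 1 - (19/10)*(3*x^2 + 3*y^2 + 21*z^2 - 21*x*y*z - (21/8)*x^4 - (49/8)*y^4) :=
    sq_one_sub' hg0 hg2
  have hU : (1 - 3*x^2 - 3*y^2 - 21*z^2 + 21*x*y*z + (21/8)*x^4 + (49/8)*y^4)^2
      = (1 - (3*x^2 + 3*y^2 + 21*z^2 - 21*x*y*z - (21/8)*x^4 - (49/8)*y^4))^2 := by ring
  have hA2 : (6*z + 3*x*y)^2 ≤ 36*z^2 + (93/100)*(x^2+y^2) := by
    nlinarith [hxyz, hxy22]
  have e1 : x^2*y^2 ≤ 1/160000 := by nlinarith [hx2, hy2, sq_nonneg x, sq_nonneg y]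
  have hb1 : (x*y^3)^2 ≤ (1/160000)*y^2 := by
    nlinarith [mul_le_mul_of_nonneg_right e1 (sq_nonneg (y^2)), hy4, sq_nonneg (y^2)]
  have hb2 : (y^2*z)^2 ≤ (1/160000)*z^2 := by
    nlinarith [mul_le_mul_of_nonneg_right hy4 (sq_nonneg z),
      mul_le_mul_of_nonneg_right hy2 (sq_nonneg z)]
  have hb3 : (x^2*z)^2 ≤ (1/160000)*z^2 := by
    nlinarith [mul_le_mul_of_nonneg_right hx4 (sq_nonneg z),
      mul_le_mul_of_nonneg_right hx2 (sq_nonneg z)]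
  have h3sq : (7*x*y^3 - 21*y^2*z - 21*x^2*z)^2
      ≤ 147*(x*y^3)^2 + 1323*(y^2*z)^2 + 1323*(x^2*z)^2 := by
    nlinarith [sq_nonneg (7*x*y^3 + 21*y^2*z), sq_nonneg (7*x*y^3 + 21*x^2*z),
      sq_nonneg (21*y^2*z - 21*x^2*z)]
  have hB2 : (7*x*y^3 - 21*y^2*z - 21*x^2*z)^2 ≤ (2/100)*(x^2+y^2+z^2) := by
    nlinarith [h3sq, hb1, hb2, hb3, sq_nonneg x]
  have hV : (6*z + 3*x*y + 7*x*y^3 - 21*y^2*z - 21*x^2*z)^2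
      ≤ (51/50)*(6*z + 3*x*y)^2 + 51*(7*x*y^3 - 21*y^2*z - 21*x^2*z)^2 := by
    have := sq_add_split' (6*z + 3*x*y) (7*x*y^3 - 21*y^2*z - 21*x^2*z)
    calc (6*z + 3*x*y + 7*x*y^3 - 21*y^2*z - 21*x^2*z)^2
        = ((6*z + 3*x*y) + (7*x*y^3 - 21*y^2*z - 21*x^2*z))^2 := by ring
      _ ≤ _ := this
  rw [hU]
  linarith [hu2, hV, hA2, hB2, hg1]

lemma fex_smooth : ContDiff ℝ (⊤ : ℕ∞) fex := by unfold fex; fun_prop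

lemma fderiv_fex (p v : ℝ × ℝ × ℝ) :
    fderiv ℝ fex p v =
      (1 - 3*p.1^2 - 21*(p.2.2^2 - (1/8)*p.2.1^4 - (1/8)*p.1^4)) * v.1
      + (6*p.2.2 - 21*(-(1/2)*p.1*p.2.1^3 + p.2.1^2*p.2.2)) * v.2.1
      + (6*p.2.1 - 21*(2*p.1*p.2.2 + (1/3)*p.2.1^3)) * v.2.2 := by
  have h1 : HasFDerivAt (fun q : ℝ × ℝ × ℝ => q.1)
      (ContinuousLinearMap.fst ℝ ℝ (ℝ × ℝ)) p := hasFDerivAt_fst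
  have h2 : HasFDerivAt (fun q : ℝ × ℝ × ℝ => q.2.1)
      ((ContinuousLinearMap.fst ℝ ℝ ℝ).comp (ContinuousLinearMap.snd ℝ ℝ (ℝ × ℝ))) p :=
    hasFDerivAt_fst.comp p hasFDerivAt_snd
  have h3 : HasFDerivAt (fun q : ℝ × ℝ × ℝ => q.2.2)
      ((ContinuousLinearMap.snd ℝ ℝ ℝ).comp (ContinuousLinearMap.snd ℝ ℝ (ℝ × ℝ))) p :=
    hasFDerivAt_snd.comp p hasFDerivAt_snd
  have hfe : fex = fun q : ℝ × ℝ × ℝ =>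
      q.1 + (6 * q.2.1) * q.2.2 - q.1 * q.1 * q.1
      - 21 * (q.1 * (q.2.2 * q.2.2) - ((1/8) * q.1) * (q.2.1 * q.2.1 * q.2.1 * q.2.1)
        + ((1/3) * (q.2.1 * q.2.1 * q.2.1)) * q.2.2
        - (1/40) * (q.1 * q.1 * q.1 * q.1 * q.1)) := by
    funext q; simp only [fex]; ring
  rw [hfe]
  have H : HasFDerivAt (fun q : ℝ × ℝ × ℝ =>
      q.1 + (6 * q.2.1) * q.2.2 - q.1 * q.1 * q.1
      - 21 * (q.1 * (q.2.2 * q.2.2) - ((1/8) * q.1) * (q.2.1 * q.2.1 * q.2.1 * q.2.1)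
        + ((1/3) * (q.2.1 * q.2.1 * q.2.1)) * q.2.2
        - (1/40) * (q.1 * q.1 * q.1 * q.1 * q.1))) _ p :=
    ((h1.add ((h2.const_mul (6:ℝ)).mul h3)).sub ((h1.mul h1).mul h1)).sub
      (((((h1.mul (h3.mul h3)).sub ((h1.const_mul ((1:ℝ)/8)).mul (((h2.mul h2).mul h2).mul h2))).add
        ((((h2.mul h2).mul h2).const_mul ((1:ℝ)/3)).mul h3)).sub
        (((((h1.mul h1).mul h1).mul h1).mul h1).const_mul ((1:ℝ)/40))).const_mul (21:ℝ))
  rw [H.fderiv]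
  simp [ContinuousLinearMap.comp_apply]
  ring

def uA : ℝ × ℝ × ℝ → ℝ := fun q =>
  1 - 3*q.1^2 - 3*q.2.1^2 - 21*q.2.2^2 + 21*q.1*q.2.1*q.2.2 + (21/8)*q.1^4 + (49/8)*q.2.1^4

def vA : ℝ × ℝ × ℝ → ℝ := fun q =>
  6*q.2.2 + 3*q.1*q.2.1 + 7*q.1*q.2.1^3 - 21*q.2.1^2*q.2.2 - 21*q.1^2*q.2.2

lemma fderiv_uA (p v : ℝ × ℝ × ℝ) :
    fderiv ℝ uA p v =
      (-6*p.1 + 21*p.2.1*p.2.2 + (21/2)*p.1^3) * v.1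
      + (-6*p.2.1 + 21*p.1*p.2.2 + (49/2)*p.2.1^3) * v.2.1
      + (-42*p.2.2 + 21*p.1*p.2.1) * v.2.2 := by
  have h1 : HasFDerivAt (fun q : ℝ × ℝ × ℝ => q.1)
      (ContinuousLinearMap.fst ℝ ℝ (ℝ × ℝ)) p := hasFDerivAt_fst
  have h2 : HasFDerivAt (fun q : ℝ × ℝ × ℝ => q.2.1)
      ((ContinuousLinearMap.fst ℝ ℝ ℝ).comp (ContinuousLinearMap.snd ℝ ℝ (ℝ × ℝ))) p :=
    hasFDerivAt_fst.comp p hasFDerivAt_snd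
  have h3 : HasFDerivAt (fun q : ℝ × ℝ × ℝ => q.2.2)
      ((ContinuousLinearMap.snd ℝ ℝ ℝ).comp (ContinuousLinearMap.snd ℝ ℝ (ℝ × ℝ))) p :=
    hasFDerivAt_snd.comp p hasFDerivAt_snd
  have hfe : uA = fun q : ℝ × ℝ × ℝ =>
      (1:ℝ) - 3*(q.1*q.1) - 3*(q.2.1*q.2.1) - 21*(q.2.2*q.2.2)
      + (21*q.1)*(q.2.1*q.2.2) + (21/8)*(q.1*q.1*q.1*q.1) + (49/8)*(q.2.1*q.2.1*q.2.1*q.2.1) := by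
    funext q; simp only [uA]; ring
  rw [hfe]
  have H : HasFDerivAt (fun q : ℝ × ℝ × ℝ =>
      (1:ℝ) - 3*(q.1*q.1) - 3*(q.2.1*q.2.1) - 21*(q.2.2*q.2.2)
      + (21*q.1)*(q.2.1*q.2.2) + (21/8)*(q.1*q.1*q.1*q.1) + (49/8)*(q.2.1*q.2.1*q.2.1*q.2.1)) _ p :=
    (((((hasFDerivAt_const (1:ℝ) p).sub ((h1.mul h1).const_mul (3:ℝ))).sub
      ((h2.mul h2).const_mul (3:ℝ))).sub ((h3.mul h3).const_mul (21:ℝ))).add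
      ((h1.const_mul (21:ℝ)).mul (h2.mul h3))).add
      ((((h1.mul h1).mul h1).mul h1).const_mul ((21:ℝ)/8)) |>.add
      ((((h2.mul h2).mul h2).mul h2).const_mul ((49:ℝ)/8))
  rw [H.fderiv]
  simp [ContinuousLinearMap.comp_apply]
  ring

lemma fderiv_vA (p v : ℝ × ℝ × ℝ) :
    fderiv ℝ vA p v =
      (3*p.2.1 + 7*p.2.1^3 - 42*p.1*p.2.2) * v.1
      + (3*p.1 + 21*p.1*p.2.1^2 - 42*p.2.1*p.2.2) * v.2.1
      + (6 - 21*p.2.1^2 - 21*p.1^2) * v.2.2 := by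
  have h1 : HasFDerivAt (fun q : ℝ × ℝ × ℝ => q.1)
      (ContinuousLinearMap.fst ℝ ℝ (ℝ × ℝ)) p := hasFDerivAt_fst
  have h2 : HasFDerivAt (fun q : ℝ × ℝ × ℝ => q.2.1)
      ((ContinuousLinearMap.fst ℝ ℝ ℝ).comp (ContinuousLinearMap.snd ℝ ℝ (ℝ × ℝ))) p :=
    hasFDerivAt_fst.comp p hasFDerivAt_snd
  have h3 : HasFDerivAt (fun q : ℝ × ℝ × ℝ => q.2.2)
      ((ContinuousLinearMap.snd ℝ ℝ ℝ).comp (ContinuousLinearMap.snd ℝ ℝ (ℝ × ℝ))) p :=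
    hasFDerivAt_snd.comp p hasFDerivAt_snd
  have hfe : vA = fun q : ℝ × ℝ × ℝ =>
      6*q.2.2 + (3*q.1)*q.2.1 + (7*q.1)*(q.2.1*q.2.1*q.2.1)
      - (21*(q.2.1*q.2.1))*q.2.2 - (21*(q.1*q.1))*q.2.2 := by
    funext q; simp only [vA]; ring
  rw [hfe]
  have H : HasFDerivAt (fun q : ℝ × ℝ × ℝ =>
      6*q.2.2 + (3*q.1)*q.2.1 + (7*q.1)*(q.2.1*q.2.1*q.2.1)
      - (21*(q.2.1*q.2.1))*q.2.2 - (21*(q.1*q.1))*q.2.2) _ p :=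
    ((((h3.const_mul (6:ℝ)).add ((h1.const_mul (3:ℝ)).mul h2)).add
      ((h1.const_mul (7:ℝ)).mul ((h2.mul h2).mul h2))).sub
      (((h2.mul h2).const_mul (21:ℝ)).mul h3)).sub
      (((h1.mul h1).const_mul (21:ℝ)).mul h3)
  rw [H.fderiv]
  simp [ContinuousLinearMap.comp_apply]
  ring

lemma X1_fex : X1 fex = uA := by
  funext p
  simp only [X1, Dx, Ds, fderiv_fex, uA]
  ring

lemma X2_fex : X2 fex = vA := by
  funext p
  simp only [X2, Dy, Ds, fderiv_fex, vA]
  ring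

lemma lapH_fex (p : ℝ × ℝ × ℝ) : lapH fex p = 0 := by
  simp only [lapH, X1_fex, X2_fex, X1, X2, Dx, Dy, Ds, fderiv_uA, fderiv_vA]
  ring

lemma gammaL_fex (p : ℝ × ℝ × ℝ) : gammaL fex p = (uA p)^2 + (vA p)^2 := by
  simp only [gammaL, X1_fex, X2_fex]

/-- Failure of the maximum modulus theorem for the left-invariant carré du champ: there is
`r > 0` such that the smooth function `fex` is `Δ_H`-harmonic on the Euclidean ball
`B = {x² + y² + σ² < r²}`, satisfies `|∇_H f|² ≤ 1` on `B` and `|∇_H f(0)|² = 1`, and yet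
`fex` is not linear on `B`. -/
theorem left_maximum_modulus_fails :
    ∃ r : ℝ, 0 < r ∧
      ContDiff ℝ (⊤ : ℕ∞) fex ∧
      (∀ p : ℝ × ℝ × ℝ, p.1 ^ 2 + p.2.1 ^ 2 + p.2.2 ^ 2 < r ^ 2 → lapH fex p = 0) ∧
      (∀ p : ℝ × ℝ × ℝ, p.1 ^ 2 + p.2.1 ^ 2 + p.2.2 ^ 2 < r ^ 2 → gammaL fex p ≤ 1) ∧
      gammaL fex (0, 0, 0) = 1 ∧
      ¬ ∃ α a b : ℝ, ∀ p : ℝ × ℝ × ℝ,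
        p.1 ^ 2 + p.2.1 ^ 2 + p.2.2 ^ 2 < r ^ 2 →
        fex p = α + a * p.1 + b * p.2.1 := by
  refine ⟨1/20, by norm_num, fex_smooth, fun p _ => lapH_fex p, ?_, ?_, ?_⟩
  · intro p hp
    rw [gammaL_fex]
    simpa only [uA, vA] using key_ineq p.1 p.2.1 p.2.2 hp
  · rw [gammaL_fex]; norm_num [uA, vA]
  · rintro ⟨α, a, b, hlin⟩
    have h0 := hlin (0, 0, 0) (by norm_num)
    have h1 := hlin (1/40, 0, 0) (by norm_num)
    have h2 := hlin (1/80, 0, 0) (by norm_num)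
    norm_num [fex] at h0 h1 h2
    linarith
end
end

section
/- Let f : ℝ³ → ℝ be defined by f(x,y,σ) = x + 6yσ − x³ − 21(xσ² − (1/8)xy⁴ + (1/3)y³σ − (1/40)x⁵), and define k(x,y,σ) = |∇_H f(x,y,σ)|² − 1 + 6(x² + y² + σ²). Then k(0,0,0) = 0 and k(x,y,σ) = O((x² + y² + σ²)^{3/2}) near the origin; that is, there exist constants C > 0 and δ > 0 such that |k(x,y,σ)| ≤ C (x² + y² + σ²)^{3/2} whenever x² + y² + σ² < δ². -/
noncomputable section

lemma fex_deriv (p : ℝ × ℝ × ℝ) :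
    HasFDerivAt fex
      ((1 - 3*p.1^2 - 21*(p.2.2^2 - (1/8)*p.2.1^4 - (1/8)*p.1^4)) •
          (ContinuousLinearMap.fst ℝ ℝ (ℝ × ℝ)) +
        (6*p.2.2 - 21*(-(1/2)*p.1*p.2.1^3 + p.2.1^2*p.2.2)) •
          ((ContinuousLinearMap.fst ℝ ℝ ℝ).comp (ContinuousLinearMap.snd ℝ ℝ (ℝ × ℝ))) +
        (6*p.2.1 - 21*(2*p.1*p.2.2 + (1/3)*p.2.1^3)) •
          ((ContinuousLinearMap.snd ℝ ℝ ℝ).comp (ContinuousLinearMap.snd ℝ ℝ (ℝ × ℝ)))) p := by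
  have hx : HasFDerivAt (fun q : ℝ × ℝ × ℝ => q.1)
      (ContinuousLinearMap.fst ℝ ℝ (ℝ × ℝ)) p := hasFDerivAt_fst
  have hy : HasFDerivAt (fun q : ℝ × ℝ × ℝ => q.2.1)
      ((ContinuousLinearMap.fst ℝ ℝ ℝ).comp (ContinuousLinearMap.snd ℝ ℝ (ℝ × ℝ))) p :=
    hasFDerivAt_fst.comp p hasFDerivAt_snd
  have hs : HasFDerivAt (fun q : ℝ × ℝ × ℝ => q.2.2)
      ((ContinuousLinearMap.snd ℝ ℝ ℝ).comp (ContinuousLinearMap.snd ℝ ℝ (ℝ × ℝ))) p :=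
    hasFDerivAt_snd.comp p hasFDerivAt_snd
  have t1 := (hx.add ((hy.const_mul (6:ℝ)).mul hs)).sub (hx.mul (hx.mul hx))
  have t2 := (hx.mul (hs.mul hs)).sub ((hx.const_mul (1/8:ℝ)).mul (hy.mul (hy.mul (hy.mul hy))))
  have t3 := t2.add (((hy.mul (hy.mul hy)).const_mul (1/3:ℝ)).mul hs)
  have t4 := t3.sub ((hx.mul (hx.mul (hx.mul (hx.mul hx)))).const_mul (1/40:ℝ))
  have H := t1.sub (t4.const_mul (21:ℝ))
  have hfun : fex =
    (fun p : ℝ × ℝ × ℝ =>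
      p.1 + 6 * p.2.1 * p.2.2 - p.1 * (p.1 * p.1)
        - 21 * (p.1 * (p.2.2 * p.2.2) - 1/8 * p.1 * (p.2.1 * (p.2.1 * (p.2.1 * p.2.1)))
          + 1/3 * (p.2.1 * (p.2.1 * p.2.1)) * p.2.2
          - 1/40 * (p.1 * (p.1 * (p.1 * (p.1 * p.1)))))) := by
    funext q; simp only [fex]; ring
  rw [hfun]
  refine H.congr_fderiv ?_
  refine ContinuousLinearMap.ext fun v => ?_
  simp [ContinuousLinearMap.comp_apply, ContinuousLinearMap.add_apply,
    ContinuousLinearMap.smul_apply, ContinuousLinearMap.sub_apply, smul_eq_mul]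
  ring

lemma X1_fex_s15 (p : ℝ × ℝ × ℝ) :
    X1 fex p = 1 - 3*p.1^2 - 3*p.2.1^2 - 21*p.2.2^2 + 21*p.1*p.2.1*p.2.2
      + 21/8*p.1^4 + 49/8*p.2.1^4 := by
  have h := (fex_deriv p).fderiv
  simp [X1, Dx, Ds, h]
  ring

lemma X2_fex_s15 (p : ℝ × ℝ × ℝ) :
    X2 fex p = 6*p.2.2 + 3*p.1*p.2.1 - 21*(p.1^2 + p.2.1^2)*p.2.2 + 7*p.1*p.2.1^3 := by
  have h := (fex_deriv p).fderiv
  simp [X2, Dy, Ds, h]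
  ring


set_option maxHeartbeats 1600000 in
/-- The remainder `k = |∇_H fex|² − 1 + 6(x² + y² + σ²)` vanishes at the origin and is
`O((x² + y² + σ²)^{3/2})` near the origin. -/
theorem fex_carre_expansion :
    (fun p : ℝ × ℝ × ℝ => gammaL fex p - 1 + 6 * (p.1 ^ 2 + p.2.1 ^ 2 + p.2.2 ^ 2))
      (0, 0, 0) = 0 ∧
    ∃ C : ℝ, 0 < C ∧ ∃ δ : ℝ, 0 < δ ∧ ∀ p : ℝ × ℝ × ℝ,
      p.1 ^ 2 + p.2.1 ^ 2 + p.2.2 ^ 2 < δ ^ 2 →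
      |gammaL fex p - 1 + 6 * (p.1 ^ 2 + p.2.1 ^ 2 + p.2.2 ^ 2)|
        ≤ C * (p.1 ^ 2 + p.2.1 ^ 2 + p.2.2 ^ 2) ^ ((3 : ℝ) / 2) := by
  constructor
  · simp [gammaL, X1_fex_s15, X2_fex_s15]
  refine ⟨10000, by norm_num, 1, by norm_num, fun p hp => ?_⟩
  obtain ⟨x, y, σ⟩ := p
  simp only at hp ⊢
  obtain ⟨r2, hr2def⟩ : ∃ r2 : ℝ, r2 = x ^ 2 + y ^ 2 + σ ^ 2 := ⟨_, rfl⟩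
  rw [← hr2def]
  rw [← hr2def] at hp
  have hr2 : 0 ≤ r2 := by rw [hr2def]; positivity
  obtain ⟨s, hsdef⟩ : ∃ s : ℝ, s = Real.sqrt r2 := ⟨_, rfl⟩
  have hs0 : 0 ≤ s := hsdef ▸ Real.sqrt_nonneg _
  have hss : s ^ 2 = r2 := hsdef ▸ Real.sq_sqrt hr2
  have hs1 : s ≤ 1 := by nlinarith [hp, hss, hs0]
  have habs : ∀ t : ℝ, t ^ 2 ≤ r2 → |t| ≤ s := fun t ht => by
    nlinarith [hss, hs0, abs_nonneg t, sq_abs t]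
  have hx : |x| ≤ s := habs x (by rw [hr2def]; nlinarith [sq_nonneg y, sq_nonneg σ])
  have hy : |y| ≤ s := habs y (by rw [hr2def]; nlinarith [sq_nonneg x, sq_nonneg σ])
  have hσ : |σ| ≤ s := habs σ (by rw [hr2def]; nlinarith [sq_nonneg x, sq_nonneg y])
  have hx2 : x^2 ≤ s^2 := by rw [hss, hr2def]; nlinarith [sq_nonneg y, sq_nonneg σ]
  have hy2 : y^2 ≤ s^2 := by rw [hss, hr2def]; nlinarith [sq_nonneg x, sq_nonneg σ]
  have hσ2 : σ^2 ≤ s^2 := by rw [hss, hr2def]; nlinarith [sq_nonneg x, sq_nonneg y]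
  have hs32 : s^3 ≤ s^2 := by nlinarith [hs0, hs1]
  have hs42 : s^4 ≤ s^2 := by nlinarith [hs0, hs1, sq_nonneg s, sq_nonneg (s^2)]
  have hs43 : s^4 ≤ s^3 := by nlinarith [hs0, hs1, sq_nonneg s]
  have hx4 : x^4 ≤ s^4 := by
    have := mul_self_le_mul_self (sq_nonneg x) hx2
    nlinarith [this]
  have hy4 : y^4 ≤ s^4 := by
    have := mul_self_le_mul_self (sq_nonneg y) hy2
    nlinarith [this]
  obtain ⟨a, hadef⟩ : ∃ a : ℝ, a = -3*x^2 - 3*y^2 - 21*σ^2 + 21*x*y*σ + 21/8*x^4 + 49/8*y^4 :=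
    ⟨_, rfl⟩
  obtain ⟨b, hbdef⟩ : ∃ b : ℝ, b = 3*x*y - 21*(x^2 + y^2)*σ + 7*x*y^3 := ⟨_, rfl⟩
  have hX1 : X1 fex (x, y, σ) = 1 + a := by rw [X1_fex_s15, hadef]; ring
  have hX2 : X2 fex (x, y, σ) = 6*σ + b := by rw [X2_fex_s15, hbdef]; ring
  have hk : gammaL fex (x, y, σ) - 1 + 6 * r2 =
      42*(x*y*σ) + 21/4*x^4 + 49/4*y^4 + a^2 + 12*(σ*b) + b^2 := by
    rw [gammaL, hX1, hX2, hadef, hbdef, hr2def]; ring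
  have hxyσ : |x*y*σ| ≤ s^3 := by
    calc |x*y*σ| = |x| * |y| * |σ| := by rw [abs_mul, abs_mul]
    _ ≤ s*s*s := by
        apply mul_le_mul (mul_le_mul hx hy (abs_nonneg _) hs0) hσ (abs_nonneg _)
        positivity
    _ = s^3 := by ring
  have hxyσ' := abs_le.mp hxyσ
  have ha : |a| ≤ 57 * s^2 := by
    rw [abs_le, hadef]
    constructor <;>
      linarith [sq_nonneg x, sq_nonneg y, sq_nonneg σ, sq_nonneg (x^2), sq_nonneg (y^2),
        hxyσ'.1, hxyσ'.2, hx2, hy2, hσ2, hs32, hs42, hx4, hy4]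
  have hxy : |x*y| ≤ s^2 := by
    calc |x*y| = |x| * |y| := abs_mul _ _
    _ ≤ s*s := mul_le_mul hx hy (abs_nonneg _) hs0
    _ = s^2 := by ring
  have hxy3 : |x*y^3| ≤ s^4 := by
    have h0 : |x*y^3| = |x| * (|y| * |y| * |y|) := by rw [abs_mul, abs_pow]; ring
    rw [h0]
    calc |x| * (|y| * |y| * |y|) ≤ s*(s*s*s) := by
          apply mul_le_mul hx _ (by positivity) hs0
          apply mul_le_mul (mul_le_mul hy hy (abs_nonneg _) hs0) hy (abs_nonneg _) (by positivity)
    _ = s^4 := by ring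
  have hx2y2σ : |(x^2+y^2)*σ| ≤ 2*s^3 := by
    rw [abs_mul]
    calc |x^2+y^2| * |σ| ≤ (2*s^2) * s := by
          apply mul_le_mul _ hσ (abs_nonneg _) (by positivity)
          rw [abs_of_nonneg (by positivity)]; linarith
    _ = 2*s^3 := by ring
  have hxy' := abs_le.mp hxy
  have hxy3' := abs_le.mp hxy3
  have hx2y2σ' := abs_le.mp hx2y2σ
  have hb : |b| ≤ 52 * s^2 := by
    rw [abs_le, hbdef]
    constructor <;>
      linarith [hxy'.1, hxy'.2, hxy3'.1, hxy3'.2, hx2y2σ'.1, hx2y2σ'.2, hs32, hs42]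
  have ha2 : a^2 ≤ 3249 * s^4 := by
    have h1 := mul_self_le_mul_self (abs_nonneg a) ha
    rw [abs_mul_abs_self] at h1
    nlinarith [h1]
  have hb2 : b^2 ≤ 2704 * s^4 := by
    have h1 := mul_self_le_mul_self (abs_nonneg b) hb
    rw [abs_mul_abs_self] at h1
    nlinarith [h1]
  have hσb : |σ*b| ≤ 52 * s^3 := by
    rw [abs_mul]
    calc |σ| * |b| ≤ s * (52*s^2) := mul_le_mul hσ hb (abs_nonneg _) hs0
    _ = 52*s^3 := by ring
  have hσb' := abs_le.mp hσb
  have hgoalrhs : r2 ^ ((3:ℝ)/2) = s^3 := by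
    rw [hsdef, Real.sqrt_eq_rpow, ← Real.rpow_natCast (r2 ^ ((1:ℝ)/2)) 3,
      ← Real.rpow_mul hr2]
    norm_num
  rw [hk, hgoalrhs, abs_le]
  have hs3nn : 0 ≤ s^3 := by positivity
  constructor <;> linarith [sq_nonneg a, sq_nonneg b, sq_nonneg (x^2), sq_nonneg (y^2),
    hxyσ'.1, hxyσ'.2, hσb'.1, hσb'.2, hx4, hy4, hs43, ha2, hb2, hs3nn]
end
end
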